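/- For every n ≥ 2, the QBF QUPARITY_n is false. -/

import Mathlib

/-! Generic framework for QBFs in prenex CNF. -/

inductive Q
  | ex
  | all
deriving DecidableEq

abbrev Lit (V : Type) := V × Bool
abbrev Clause (V : Type) := Finset (Lit V)
abbrev Cnf (V : Type) := Finset (Clause V)
abbrev QPrefix (V : Type) := List (Q × V)

variable {V : Type} [DecidableEq V]

/-- Negation of a literal. -/
def negLit (l : Lit V) : Lit V := (l.1, !l.2)

/-- Evaluation of a literal under an assignment. -/
def evalLit (τ : V → Bool) (l : Lit V) : Bool := if l.2 then τ l.1 else !(τ l.1)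

/-- An assignment satisfies a clause if some literal evaluates to true. -/
def SatClause (τ : V → Bool) (C : Clause V) : Prop := ∃ l ∈ C, evalLit τ l = true

/-- An assignment satisfies a CNF if it satisfies all clauses. -/
def SatCnf (τ : V → Bool) (φ : Cnf V) : Prop := ∀ C ∈ φ, SatClause τ C

/-- Recursive semantics of a quantifier prefix over a matrix predicate. -/
def QTrue : QPrefix V → (V → Bool) → ((V → Bool) → Prop) → Prop
  | [], τ, M => M τ
  | (Q.ex, v) :: P, τ, M => ∃ b, QTrue P (Function.update τ v b) M
  | (Q.all, v) :: P, τ, M => ∀ b, QTrue P (Function.update τ v b) M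

/-- Truth of a prenex CNF QBF (closed; the default assignment is irrelevant). -/
def QBFTrue (P : QPrefix V) (φ : Cnf V) : Prop :=
  QTrue P (fun _ => false) (fun τ => SatCnf τ φ)

/-- Two variables are in the same quantifier block of a prefix. -/
def SameBlock (P : QPrefix V) (v w : V) : Prop :=
  ∃ i j : ℕ, (∃ q : Q, P[i]? = some (q, v)) ∧ (∃ q : Q, P[j]? = some (q, w)) ∧
    ∀ (k₁ k₂ : ℕ) (e₁ e₂ : Q × V), min i j ≤ k₁ → k₁ ≤ k₂ → k₂ ≤ max i j →
      P[k₁]? = some e₁ → P[k₂]? = some e₂ → e₁.1 = e₂.1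

/-- An admissible literal map for a prefix: a bijection on literals commuting with
negation and moving variables only within their quantifier block. -/
structure Admissible (P : QPrefix V) (σ : Lit V → Lit V) : Prop where
  bij : Function.Bijective σ
  neg : ∀ l, σ (negLit l) = negLit (σ l)
  block : ∀ v w b c, σ (v, b) = (w, c) → v ≠ w → SameBlock P v w

/-- Action of a literal map on a clause. -/
def mapClause (σ : Lit V → Lit V) (C : Clause V) : Clause V := C.image σ

/-- A (syntactic) symmetry of a QBF: an admissible map sending the clause set to itself. -/
def IsSymmetry (P : QPrefix V) (φ : Cnf V) (σ : Lit V → Lit V) : Prop :=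
  Admissible P σ ∧ φ.image (mapClause σ) = φ

def IsExist (P : QPrefix V) (v : V) : Prop := (Q.ex, v) ∈ P
def IsUniv (P : QPrefix V) (v : V) : Prop := (Q.all, v) ∈ P

/-- A clause is a tautology if it contains complementary literals. -/
def Tauto (C : Clause V) : Prop := ∃ l ∈ C, negLit l ∈ C

/-- Rule R of Q-Res: resolution over an existential variable, with
non-tautological resolvent. -/
def ResStep (P : QPrefix V) (E₁ E₂ E : Clause V) : Prop :=
  ∃ x, IsExist P x ∧ (x, true) ∈ E₁ ∧ (x, false) ∈ E₂ ∧
    E = E₁.erase (x, true) ∪ E₂.erase (x, false) ∧ ¬ Tauto E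

/-- Prefix order on variables: `v` occurs strictly before `w`. -/
def LtP (P : QPrefix V) (v w : V) : Prop :=
  ∃ i j : ℕ, i < j ∧ (∃ q : Q, P[i]? = some (q, v)) ∧ (∃ q : Q, P[j]? = some (q, w))

/-- Rule U of Q-Res: universal reduction. -/
def URed (P : QPrefix V) (F₁ F : Clause V) : Prop :=
  ∃ l, IsUniv P l.1 ∧ l ∈ F₁ ∧ negLit l ∉ F₁ ∧ F = F₁.erase l ∧
    ∀ k ∈ F₁.erase l, IsExist P k.1 → LtP P k.1 l.1

/-- Derivability in Q-Res (rules A, R, U). -/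
inductive Derives (P : QPrefix V) (φ : Cnf V) : Clause V → Prop
  | ax {C : Clause V} : C ∈ φ → Derives P φ C
  | res {E₁ E₂ E : Clause V} :
      Derives P φ E₁ → Derives P φ E₂ → ResStep P E₁ E₂ E → Derives P φ E
  | ured {F₁ F : Clause V} : Derives P φ F₁ → URed P F₁ F → Derives P φ F

/-- Derivability in Q-Res+S (rules A, R, U, S). -/
inductive DerivesS (P : QPrefix V) (φ : Cnf V) : Clause V → Prop
  | ax {C : Clause V} : C ∈ φ → DerivesS P φ C
  | res {E₁ E₂ E : Clause V} :
      DerivesS P φ E₁ → DerivesS P φ E₂ → ResStep P E₁ E₂ E → DerivesS P φ E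
  | ured {F₁ F : Clause V} : DerivesS P φ F₁ → URed P F₁ F → DerivesS P φ F
  | sym {C : Clause V} {σ : Lit V → Lit V} :
      DerivesS P φ C → IsSymmetry P φ σ → DerivesS P φ (mapClause σ C)

/-- A clause available at step `i` of a derivation sequence: an input clause
(axiom rule A, not counted as a step) or an earlier line. -/
def Avail (φ : Cnf V) (D : List (Clause V)) (i : ℕ) (C : Clause V) : Prop :=
  C ∈ φ ∨ ∃ j, ∃ _ : j < i, ∃ hj : j < D.length, D[j]'hj = C

/-- Line `C` at position `i` is justified by rule R or U from available clauses. -/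
def StepOK (P : QPrefix V) (φ : Cnf V) (D : List (Clause V)) (i : ℕ) (C : Clause V) : Prop :=
  (∃ E₁ E₂, Avail φ D i E₁ ∧ Avail φ D i E₂ ∧ ResStep P E₁ E₂ C) ∨
  (∃ F₁, Avail φ D i F₁ ∧ URed P F₁ C)

/-- Line justified by rule R, U or the symmetry rule S. -/
def StepOKS (P : QPrefix V) (φ : Cnf V) (D : List (Clause V)) (i : ℕ) (C : Clause V) : Prop :=
  StepOK P φ D i C ∨
  (∃ F₁ σ, Avail φ D i F₁ ∧ IsSymmetry P φ σ ∧ C = mapClause σ F₁)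

/-- A Q-Res refutation, as a sequence of R/U steps ending in the empty clause;
its length is the number of R and U applications. -/
def IsRefutation (P : QPrefix V) (φ : Cnf V) (D : List (Clause V)) : Prop :=
  (∀ i (hi : i < D.length), StepOK P φ D i (D[i]'hi)) ∧ D.getLast? = some (∅ : Clause V)

/-- A Q-Res+S refutation. -/
def IsRefutationS (P : QPrefix V) (φ : Cnf V) (D : List (Clause V)) : Prop :=
  (∀ i (hi : i < D.length), StepOKS P φ D i (D[i]'hi)) ∧ D.getLast? = some (∅ : Clause V)

/-- A derivation sequence using rules A, R, U: every line is an input clause or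
follows from earlier lines by R or U. -/
def IsDerivation (P : QPrefix V) (φ : Cnf V) (D : List (Clause V)) : Prop :=
  ∀ i (hi : i < D.length), (D[i]'hi) ∈ φ ∨
    (∃ j k, ∃ hj : j < i, ∃ hk : k < i,
      ResStep P (D[j]'(Nat.lt_trans hj hi)) (D[k]'(Nat.lt_trans hk hi)) (D[i]'hi)) ∨
    (∃ j, ∃ hj : j < i, URed P (D[j]'(Nat.lt_trans hj hi)) (D[i]'hi))

/-! The KBKF formula family (variables indexed 1..n). -/

inductive KV
  | x (i : ℕ)
  | y (i : ℕ)
  | a (i : ℕ)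
  | z (i : ℕ)
deriving DecidableEq

/-- Prefix ∃x₁y₁∀a₁ … ∃xₙyₙ∀aₙ ∃z₁…zₙ. -/
def kPrefix (n : ℕ) : QPrefix KV :=
  ((List.range n).flatMap
    (fun j => [(Q.ex, KV.x (j+1)), (Q.ex, KV.y (j+1)), (Q.all, KV.a (j+1))])) ++
  (List.range n).map (fun j => (Q.ex, KV.z (j+1)))

/-- The tail z̄₁ ∨ … ∨ z̄ₙ. -/
def kZneg (n : ℕ) : Clause KV := (Finset.range n).image (fun j => ((KV.z (j+1), false) : Lit KV))

/-- The clauses of KBKF_n. -/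
def kbkf (n : ℕ) : Cnf KV :=
  {({(KV.x 1, false), (KV.y 1, false)} : Clause KV)} ∪
  ((Finset.range (n-1)).image (fun j =>
    ({(KV.x (j+1), true), (KV.a (j+1), false), (KV.x (j+2), false), (KV.y (j+2), false)} : Clause KV))) ∪
  ((Finset.range (n-1)).image (fun j =>
    ({(KV.y (j+1), true), (KV.a (j+1), true), (KV.x (j+2), false), (KV.y (j+2), false)} : Clause KV))) ∪
  {({(KV.x n, true), (KV.a n, false)} : Clause KV) ∪ kZneg n,
   ({(KV.y n, true), (KV.a n, true)} : Clause KV) ∪ kZneg n} ∪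
  ((Finset.range n).image (fun j => ({(KV.a (j+1), true), (KV.z (j+1), true)} : Clause KV))) ∪
  ((Finset.range n).image (fun j => ({(KV.a (j+1), false), (KV.z (j+1), true)} : Clause KV)))

/-- The symmetry σᵢ = (xᵢ yᵢ)(x̄ᵢ ȳᵢ)(aᵢ āᵢ) of KBKF_n. -/
def kSigma (i : ℕ) : Lit KV → Lit KV
  | (KV.x j, b) => if j = i then (KV.y j, b) else (KV.x j, b)
  | (KV.y j, b) => if j = i then (KV.x j, b) else (KV.y j, b)
  | (KV.a j, b) => if j = i then (KV.a j, !b) else (KV.a j, b)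
  | (KV.z j, b) => (KV.z j, b)

/-- The symmetry breaker ψₙ = (x̄₁∨y₁) ∧ … ∧ (x̄ₙ∨yₙ) for KBKF_n. -/
def kPsi (n : ℕ) : Cnf KV :=
  (Finset.range n).image (fun j => ({(KV.x (j+1), false), (KV.y (j+1), true)} : Clause KV))

/-! The QUPARITY formula family. -/

inductive PV
  | x (i : ℕ)
  | a (i : ℕ)
  | y (i : ℕ)
deriving DecidableEq

/-- Prefix ∃x₁…xₙ ∀a₁a₂ ∃y₂…yₙ. -/
def pPrefix (n : ℕ) : QPrefix PV :=
  (List.range n).map (fun j => ((Q.ex, PV.x (j+1)) : Q × PV)) ++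
  [(Q.all, PV.a 1), (Q.all, PV.a 2)] ++
  (List.range (n-1)).map (fun k => ((Q.ex, PV.y (k+2)) : Q × PV))

/-- a₁ ∨ a₂ with sign `s` (s = true: unprimed clauses, s = false: primed clauses). -/
def pAA (s : Bool) : Clause PV := {(PV.a 1, s), (PV.a 2, s)}

/-- The clauses of QUPARITY_n. -/
def quparity (n : ℕ) : Cnf PV :=
  ((Finset.univ : Finset Bool).biUnion (fun s =>
    ({({(PV.x 1, false), (PV.x 2, false), (PV.y 2, false)} : Clause PV) ∪ pAA s,
      ({(PV.x 1, false), (PV.x 2, true), (PV.y 2, true)} : Clause PV) ∪ pAA s,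
      ({(PV.x 1, true), (PV.x 2, false), (PV.y 2, true)} : Clause PV) ∪ pAA s,
      ({(PV.x 1, true), (PV.x 2, true), (PV.y 2, false)} : Clause PV) ∪ pAA s} : Cnf PV) ∪
    ((Finset.range (n-2)).biUnion (fun k =>
      ({({(PV.y (k+2), false), (PV.x (k+3), false), (PV.y (k+3), false)} : Clause PV) ∪ pAA s,
        ({(PV.y (k+2), false), (PV.x (k+3), true), (PV.y (k+3), true)} : Clause PV) ∪ pAA s,
        ({(PV.y (k+2), true), (PV.x (k+3), false), (PV.y (k+3), true)} : Clause PV) ∪ pAA s,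
        ({(PV.y (k+2), true), (PV.x (k+3), true), (PV.y (k+3), false)} : Clause PV) ∪ pAA s} : Cnf PV))))) ∪
  {({(PV.a 1, true), (PV.a 2, true), (PV.y n, true)} : Clause PV),
   ({(PV.a 1, false), (PV.a 2, false), (PV.y n, false)} : Clause PV)}

/-- The symmetry σ₁ = (x₁ x₂)(x̄₁ x̄₂) of QUPARITY_n. -/
def pSigma1 : Lit PV → Lit PV
  | (PV.x 1, b) => (PV.x 2, b)
  | (PV.x 2, b) => (PV.x 1, b)
  | l => l

/-- The symmetry σᵢ = (xᵢ x̄ᵢ)(a₁ ā₁)(a₂ ā₂)(yᵢ ȳᵢ)⋯(yₙ ȳₙ) of QUPARITY_n, 2 ≤ i ≤ n. -/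
def pSigma (n i : ℕ) : Lit PV → Lit PV
  | (PV.x j, b) => if j = i then (PV.x j, !b) else (PV.x j, b)
  | (PV.a j, b) => if j = 1 ∨ j = 2 then (PV.a j, !b) else (PV.a j, b)
  | (PV.y j, b) => if i ≤ j ∧ j ≤ n then (PV.y j, !b) else (PV.y j, b)

/-- The symmetry breaker ψₙ = (x̄₁ ∨ x₂) ∧ x̄₂ ∧ … ∧ x̄ₙ for QUPARITY_n. -/
def pPsi (n : ℕ) : Cnf PV :=
  {({(PV.x 1, false), (PV.x 2, true)} : Clause PV)} ∪
  (Finset.range (n-1)).image (fun k => ({(PV.x (k+2), false)} : Clause PV))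

/-! The modified family KBKF'_n with blocking universal variables b_j. -/

inductive KV2
  | x (i : ℕ)
  | b (i : ℕ)
  | y (i : ℕ)
  | a (i : ℕ)
  | z (i : ℕ)
deriving DecidableEq

/-- Prefix ∃x₁∀b₁∃y₁∀a₁ … ∃xₙ∀bₙ∃yₙ∀aₙ ∃z₁…zₙ of KBKF'_n. -/
def k2Prefix (n : ℕ) : QPrefix KV2 :=
  ((List.range n).flatMap
    (fun j => [(Q.ex, KV2.x (j+1)), (Q.all, KV2.b (j+1)),
               (Q.ex, KV2.y (j+1)), (Q.all, KV2.a (j+1))])) ++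
  (List.range n).map (fun j => (Q.ex, KV2.z (j+1)))

/-- The map σᵢ = (xᵢ yᵢ)(x̄ᵢ ȳᵢ)(aᵢ āᵢ) on the literals of KBKF'_n. -/
def k2Sigma (i : ℕ) : Lit KV2 → Lit KV2
  | (KV2.x j, c) => if j = i then (KV2.y j, c) else (KV2.x j, c)
  | (KV2.y j, c) => if j = i then (KV2.x j, c) else (KV2.y j, c)
  | (KV2.a j, c) => if j = i then (KV2.a j, !c) else (KV2.a j, c)
  | (KV2.b j, c) => (KV2.b j, c)
  | (KV2.z j, c) => (KV2.z j, c)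

/-! Fix the existential choice of `x₁, …, xₙ` and set `a₁ = a₂ = s`. Then only one copy of
the chains `A_j, …, D_j` is not satisfied by its `a`-literals (the unprimed one for `s = 0`, the
primed one for `s = 1`), and it forces `y_j = x₁ ⊕ ⋯ ⊕ x_j`; so `y_n` is the same for both values
of `s`. But `E₁` forces `y_n = 1` when `s = 0`, and `E₂` forces `y_n = 0` when `s = 1`. -/

namespace QTrue

theorem append (P₁ P₂ : QPrefix V) (τ : V → Bool) (M : (V → Bool) → Prop) :
    QTrue (P₁ ++ P₂) τ M ↔ QTrue P₁ τ (fun τ' => QTrue P₂ τ' M) := by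
  induction P₁ generalizing τ with
  | nil => rfl
  | cons e P ih =>
    obtain ⟨q, v⟩ := e
    cases q <;> simp only [List.cons_append, QTrue, ih]

theorem exists_eqOn_unbound {P : QPrefix V} {τ : V → Bool} {M : (V → Bool) → Prop}
    (h : QTrue P τ M) : ∃ τ', (∀ v ∉ P.map Prod.snd, τ' v = τ v) ∧ M τ' := by
  induction P generalizing τ with
  | nil => exact ⟨τ, fun _ _ => rfl, h⟩
  | cons e P ih =>
    obtain ⟨q, w⟩ := e
    obtain ⟨b, hb⟩ : ∃ b, QTrue P (Function.update τ w b) M := by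
      cases q
      · exact h
      · exact ⟨false, h false⟩
    obtain ⟨τ', hagree, hM⟩ := ih hb
    refine ⟨τ', fun v hv => ?_, hM⟩
    simp only [List.map_cons, List.mem_cons, not_or] at hv
    rw [hagree v hv.2, Function.update_of_ne hv.1]

end QTrue

def parityUpTo (f : ℕ → Bool) : ℕ → Bool
  | 0 => false
  | j + 1 => xor (parityUpTo f j) (f (j + 1))

-- As `b₁, b₂` range over `Bool`, these are the four clauses `A_j, B_j, C_j, D_j` without `a₁ ∨ a₂`.
def xorClause (u v w : PV) (b₁ b₂ : Bool) : Clause PV := {(u, b₁), (v, b₂), (w, xor b₁ b₂)}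

lemma xorClause_union_mem_quparity_base (n : ℕ) (s b₁ b₂ : Bool) :
    xorClause (PV.x 1) (PV.x 2) (PV.y 2) b₁ b₂ ∪ pAA s ∈ quparity n := by
  refine Finset.mem_union_left _
    (Finset.mem_biUnion.2 ⟨s, Finset.mem_univ s, Finset.mem_union_left _ ?_⟩)
  simp only [Finset.mem_insert, Finset.mem_singleton]
  cases b₁ <;> cases b₂ <;>
    simp only [xorClause, Bool.xor_false, Bool.xor_true, Bool.not_false, Bool.not_true, true_or,
      or_true]

lemma xorClause_union_mem_quparity_step {n k : ℕ} (hk : k < n - 2) (s b₁ b₂ : Bool) :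
    xorClause (PV.y (k + 2)) (PV.x (k + 3)) (PV.y (k + 3)) b₁ b₂ ∪ pAA s ∈ quparity n := by
  refine Finset.mem_union_left _ (Finset.mem_biUnion.2 ⟨s, Finset.mem_univ s,
    Finset.mem_union_right _ (Finset.mem_biUnion.2 ⟨k, Finset.mem_range.2 hk, ?_⟩)⟩)
  simp only [Finset.mem_insert, Finset.mem_singleton]
  cases b₁ <;> cases b₂ <;>
    simp only [xorClause, Bool.xor_false, Bool.xor_true, Bool.not_false, Bool.not_true, true_or,
      or_true]

section Satisfying

variable {n : ℕ} {τ : PV → Bool} {s : Bool}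

lemma satClause_of_satClause_union_pAA {C : Clause PV} (ha₁ : τ (PV.a 1) = s)
    (ha₂ : τ (PV.a 2) = s) (h : SatClause τ (C ∪ pAA (!s))) : SatClause τ C := by
  obtain ⟨l, hl, hev⟩ := h
  rcases Finset.mem_union.1 hl with hC | hA
  · exact ⟨l, hC, hev⟩
  · simp only [pAA, Finset.mem_insert, Finset.mem_singleton] at hA
    rcases hA with rfl | rfl <;> cases s <;> simp_all [evalLit]

lemma eq_xor_of_satClause_xorClause {u v w : PV}
    (h : SatClause τ (xorClause u v w (!τ u) (!τ v))) : τ w = xor (τ u) (τ v) := by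
  obtain ⟨l, hl, hev⟩ := h
  simp only [xorClause, Finset.mem_insert, Finset.mem_singleton] at hl
  rcases hl with rfl | rfl | rfl <;> cases hu : τ u <;> cases hv : τ v <;> simp_all [evalLit]

lemma y_eq_parityUpTo_of_satCnf (hsat : SatCnf τ (quparity n)) (ha₁ : τ (PV.a 1) = s)
    (ha₂ : τ (PV.a 2) = s) {j : ℕ} (h2j : 2 ≤ j) (hjn : j ≤ n) :
    τ (PV.y j) = parityUpTo (fun i => τ (PV.x i)) j := by
  induction j, h2j using Nat.le_induction with
  | base =>
    have := eq_xor_of_satClause_xorClause <| satClause_of_satClause_union_pAA ha₁ ha₂ <|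
      hsat _ (xorClause_union_mem_quparity_base n (!s) _ _)
    simp [this, parityUpTo]
  | succ j h2j ih =>
    obtain ⟨k, rfl⟩ : ∃ k, j = k + 2 := ⟨j - 2, by omega⟩
    have := eq_xor_of_satClause_xorClause <| satClause_of_satClause_union_pAA ha₁ ha₂ <|
      hsat _ (xorClause_union_mem_quparity_step (by omega : k < n - 2) (!s) _ _)
    rw [this, ih (by omega)]
    rfl

lemma y_eq_not_of_satCnf (hsat : SatCnf τ (quparity n)) (ha₁ : τ (PV.a 1) = s)
    (ha₂ : τ (PV.a 2) = s) : τ (PV.y n) = !s := by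
  obtain ⟨l, hl, hev⟩ := hsat {(PV.a 1, !s), (PV.a 2, !s), (PV.y n, !s)} <| by
    cases s
    · exact Finset.mem_union_right _ (Finset.mem_insert_self _ _)
    · exact Finset.mem_union_right _ (Finset.mem_insert_of_mem (Finset.mem_singleton_self _))
  simp only [Finset.mem_insert, Finset.mem_singleton] at hl
  rcases hl with rfl | rfl | rfl <;> cases s <;> simp_all [evalLit]

end Satisfying

lemma exists_satCnf_quparity_of_qbfTrue {n : ℕ} (h : QBFTrue (pPrefix n) (quparity n)) :
    ∃ ξ : PV → Bool, ∀ s : Bool, ∃ τ, SatCnf τ (quparity n) ∧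
      τ (PV.a 1) = s ∧ τ (PV.a 2) = s ∧ ∀ i, τ (PV.x i) = ξ (PV.x i) := by
  rw [QBFTrue, pPrefix, QTrue.append, QTrue.append] at h
  obtain ⟨ξ, -, hξ⟩ := QTrue.exists_eqOn_unbound h
  refine ⟨ξ, fun s => ?_⟩
  obtain ⟨τ, hagree, hsat⟩ := QTrue.exists_eqOn_unbound
    (P := (List.range (n - 1)).map fun k => (Q.ex, PV.y (k + 2))) (hξ s s)
  refine ⟨τ, hsat, ?_, ?_, fun i => ?_⟩ <;> rw [hagree _ (by simp)] <;> simp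

/-- QUPARITY_n is false for every n ≥ 2. -/
theorem quparity_false : ∀ n : ℕ, 2 ≤ n → ¬ QBFTrue (pPrefix n) (quparity n) := by
  intro n hn h
  obtain ⟨ξ, hξ⟩ := exists_satCnf_quparity_of_qbfTrue h
  have parity_eq_not : ∀ s, parityUpTo (fun i => ξ (PV.x i)) n = !s := by
    intro s
    obtain ⟨τ, hsat, ha₁, ha₂, hx⟩ := hξ s
    rw [← y_eq_not_of_satCnf hsat ha₁ ha₂, y_eq_parityUpTo_of_satCnf hsat ha₁ ha₂ hn le_rfl]
    simp only [hx]
  simpa using (parity_eq_not true).symm.trans (parity_eq_not false)
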